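/- (Transitivity of the triality group on the complex 6-sphere.) For all z, z' ∈ 𝕆 with Re(z) = Re(z') = 0 and |z|² = |z'|² = 1, there exists a twisted triality pair (T₁, T₂) such that T₂(z) = z'. -/

import Mathlib

noncomputable section

open scoped Quaternion

/-- The complexified quaternions. -/
abbrev Hq : Type := Quaternion ℂ

theorem q_mul_smul (t : ℂ) (a b : Hq) : a * (t • b) = t • (a * b) := by
  rw [← Quaternion.coe_mul_eq_smul, ← Quaternion.coe_mul_eq_smul, ← mul_assoc,
    ← Quaternion.coe_commutes, mul_assoc]

theorem q_smul_mul (t : ℂ) (a b : Hq) : (t • a) * b = t • (a * b) := by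
  rw [← Quaternion.coe_mul_eq_smul, ← Quaternion.coe_mul_eq_smul, mul_assoc]

/-- The complexified octonions, via the Cayley–Dickson construction. -/
abbrev Oct : Type := Hq × Hq

namespace Oct

/-- Octonion multiplication (Cayley–Dickson construction). -/
def omul (x y : Oct) : Oct := (x.1 * y.1 - star y.2 * x.2, y.2 * x.1 + x.2 * star y.1)

/-- Octonion conjugation. -/
def oconj (x : Oct) : Oct := (star x.1, -x.2)

/-- The unit octonion. -/
def oone : Oct := (1, 0)

/-- Real part of an octonion: the unique scalar with `x + oconj x = (2 * oRe x) • oone`. -/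
def oRe (x : Oct) : ℂ := x.1.re

/-- Squared norm of an octonion: the unique scalar with `omul x (oconj x) = onormSq x • oone`. -/
def onormSq (x : Oct) : ℂ := Quaternion.normSq x.1 + Quaternion.normSq x.2

theorem omul_add (z x y : Oct) : omul z (x + y) = omul z x + omul z y := by
  have h1 : star (x.2 + y.2) = star x.2 + star y.2 := by ext <;> simp <;> ring
  have h2 : star (x.1 + y.1) = star x.1 + star y.1 := by ext <;> simp <;> ring
  simp only [omul, Prod.fst_add, Prod.snd_add, star_add, h1, h2, mul_add, add_mul, Prod.mk_add_mk,
    Prod.mk.injEq]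
  constructor <;> abel

theorem add_omul (x y z : Oct) : omul (x + y) z = omul x z + omul y z := by
  simp only [omul, Prod.fst_add, Prod.snd_add, star_add, mul_add, add_mul, Prod.mk_add_mk,
    Prod.mk.injEq]
  constructor <;> abel

theorem omul_smul (t : ℂ) (z x : Oct) : omul z (t • x) = t • omul z x := by
  simp only [omul, Prod.smul_fst, Prod.smul_snd, Quaternion.star_smul, q_smul_mul,
    q_mul_smul, Prod.smul_mk, smul_sub, smul_add]

theorem smul_omul (t : ℂ) (x z : Oct) : omul (t • x) z = t • omul x z := by
  simp only [omul, Prod.smul_fst, Prod.smul_snd, Quaternion.star_smul, q_smul_mul,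
    q_mul_smul, Prod.smul_mk, smul_sub, smul_add]

/-- Left multiplication `L_z` as a `ℂ`-linear endomorphism of the octonions. -/
def Lmul (z : Oct) : Oct →ₗ[ℂ] Oct where
  toFun x := omul z x
  map_add' x y := omul_add z x y
  map_smul' t x := omul_smul t z x

/-- Right multiplication `R_z` as a `ℂ`-linear endomorphism of the octonions. -/
def Rmul (z : Oct) : Oct →ₗ[ℂ] Oct where
  toFun x := omul x z
  map_add' x y := add_omul x y z
  map_smul' t x := smul_omul t x z

end Oct

namespace Oct

/-- The octonionic determinant of the hermitian matrix
`[[λ₁, c, b̄], [c̄, λ₂, a], [b, ā, λ₃]]`. -/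
def detO (l1 l2 l3 : ℂ) (a b c : Oct) : ℂ :=
  l1 * l2 * l3 + 2 * oRe (omul c (omul a b)) - l1 * onormSq a - l2 * onormSq b - l3 * onormSq c

/-- The associator `[c,b,a] = (c·b)·a − c·(b·a)`. -/
def assoc (c b a : Oct) : Oct := omul (omul c b) a - omul c (omul b a)

/-- `φ(c,b,a) = (1/2)·Re((c·b̄ − b̄·c)·a)`. -/
def phi (c b a : Oct) : ℂ := (1 / 2) * oRe (omul (omul c (oconj b) - omul (oconj b) c) a)

/-- The Ogievetskiî–Dray–Manogue sextic. -/
def SODM (l1 l2 l3 : ℂ) (a b c : Oct) : ℂ :=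
  detO l1 l2 l3 a b c ^ 2 - 4 * phi c b a * detO l1 l2 l3 a b c - onormSq (assoc c b a)

/-- The Cartan cubic `C'` of the hermitian matrix `[[λ₁, c̄, ā], [c, λ₂, b], [a, b̄, λ₃]]`. -/
def cartan' (l1 l2 l3 : ℂ) (a b c : Oct) : ℂ :=
  detO l1 l2 l3 a b c - 2 * oRe (omul c (omul a b)) + 2 * oRe (omul (oconj c) (omul b a))

/-- The sextic `𝔖`. -/
def frakS (l1 l2 l3 : ℂ) (a b c : Oct) : ℂ :=
  (l1 * onormSq a + l2 * onormSq b + l3 * onormSq c - l1 * l2 * l3) ^ 2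
    - 4 * (l1 * onormSq a + l2 * onormSq b + l3 * onormSq c - l1 * l2 * l3)
        * oRe c * oRe (omul a b)
    + 4 * (onormSq b * onormSq a * oRe c ^ 2 + onormSq c * oRe (omul a b) ^ 2
        - onormSq a * onormSq b * onormSq c)

/-- The endomorphism `M_A` of `𝕆³` attached to
`A = [[λ₁, c, b̄], [c̄, λ₂, a], [b, ā, λ₃]] ∈ J₃(𝕆)`. -/
def MA (l1 l2 l3 : ℂ) (a b c : Oct) : Oct × Oct × Oct →ₗ[ℂ] Oct × Oct × Oct where
  toFun p := (l1 • p.1 + omul c p.2.1 + omul (oconj b) p.2.2,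
              omul (oconj c) p.1 + l2 • p.2.1 + omul a p.2.2,
              omul b p.1 + omul (oconj a) p.2.1 + l3 • p.2.2)
  map_add' p q := by
    simp only [Prod.fst_add, Prod.snd_add, omul_add, smul_add, Prod.mk_add_mk, Prod.mk.injEq]
    refine ⟨?_, ?_, ?_⟩ <;> abel
  map_smul' t p := by
    simp only [Prod.smul_fst, Prod.smul_snd, omul_smul, smul_comm t, Prod.smul_mk, smul_add,
      RingHom.id_apply]

/-- The endomorphism `N_A` of `𝕆³` of the twisted octonionic eigenvalue problem. -/
def NA (l1 l2 l3 : ℂ) (a b c : Oct) : Oct × Oct × Oct →ₗ[ℂ] Oct × Oct × Oct where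
  toFun p := (l1 • p.1 + omul p.2.1 c + omul (oconj b) p.2.2,
              omul p.1 (oconj c) + l2 • p.2.1 + omul a p.2.2,
              omul b p.1 + omul (oconj a) p.2.1 + l3 • p.2.2)
  map_add' p q := by
    simp only [Prod.fst_add, Prod.snd_add, omul_add, add_omul, smul_add, Prod.mk_add_mk,
      Prod.mk.injEq]
    refine ⟨?_, ?_, ?_⟩ <;> abel
  map_smul' t p := by
    simp only [Prod.smul_fst, Prod.smul_snd, omul_smul, smul_omul, smul_comm t, Prod.smul_mk,
      smul_add, RingHom.id_apply]

/-- The exceptional Jordan algebra `J₃(𝕆)`, as the 27-dimensional space of tuples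
`(λ₁, λ₂, λ₃, a, b, c)`. -/
abbrev J3 : Type := ℂ × ℂ × ℂ × Oct × Oct × Oct

def MAj (A : J3) : Oct × Oct × Oct →ₗ[ℂ] Oct × Oct × Oct :=
  MA A.1 A.2.1 A.2.2.1 A.2.2.2.1 A.2.2.2.2.1 A.2.2.2.2.2

def NAj (A : J3) : Oct × Oct × Oct →ₗ[ℂ] Oct × Oct × Oct :=
  NA A.1 A.2.1 A.2.2.1 A.2.2.2.1 A.2.2.2.2.1 A.2.2.2.2.2

def SODMj (A : J3) : ℂ := SODM A.1 A.2.1 A.2.2.1 A.2.2.2.1 A.2.2.2.2.1 A.2.2.2.2.2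

def cartan'j (A : J3) : ℂ := cartan' A.1 A.2.1 A.2.2.1 A.2.2.2.1 A.2.2.2.2.1 A.2.2.2.2.2

def frakSj (A : J3) : ℂ := frakS A.1 A.2.1 A.2.2.1 A.2.2.2.1 A.2.2.2.2.1 A.2.2.2.2.2

/-- A twisted triality pair: a pair of `ℂ`-linear norm-preserving bijections of `𝕆` with
`T₁(x)·T₂(y) = T₁(x·y)` for all `x, y`. -/
def TwistedPair (T1 T2 : Oct →ₗ[ℂ] Oct) : Prop :=
  Function.Bijective T1 ∧ Function.Bijective T2 ∧
    (∀ x, onormSq (T1 x) = onormSq x) ∧ (∀ x, onormSq (T2 x) = onormSq x) ∧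
    ∀ x y, omul (T1 x) (T2 y) = T1 (omul x y)

/-- `K(x) = conj (T₁ x̄)`. -/
def Kmap (T1 : Oct →ₗ[ℂ] Oct) (x : Oct) : Oct := oconj (T1 (oconj x))

/-- The twisted `Spin₇`-action on `J₃(𝕆)`:
`(T₁,T₂)·(λ₁, λ₂, λ₃, a, b, c) = (λ₁, λ₂, λ₃, T₁(a), K(b), T₂(c))`. -/
def spinAct (T1 T2 : Oct →ₗ[ℂ] Oct) (A : J3) : J3 :=
  (A.1, A.2.1, A.2.2.1, T1 A.2.2.2.1, Kmap T1 A.2.2.2.2.1, T2 A.2.2.2.2.2)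

/-- The hermitian matrix `[[λ₁, c, b̄], [c̄, λ₂, a], [b, ā, λ₃]]` attached to `A ∈ J₃(𝕆)`,
with complex scalars embedded as multiples of the unit octonion. -/
def toMat (A : J3) : Matrix (Fin 3) (Fin 3) Oct :=
  !![A.1 • oone, A.2.2.2.2.2, oconj A.2.2.2.2.1;
     oconj A.2.2.2.2.2, A.2.1 • oone, A.2.2.2.1;
     A.2.2.2.2.1, oconj A.2.2.2.1, A.2.2.1 • oone]

/-- The action of a (special linear) complex `3×3` matrix `C` on `J₃(𝕆)`, sending the hermitian
matrix `M` of `A` to `Cᵀ · M · C` (the entries of `C` being central scalars). -/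
def slAct (C : Matrix (Fin 3) (Fin 3) ℂ) (A : J3) : J3 :=
  let M : Matrix (Fin 3) (Fin 3) Oct :=
    Matrix.of fun i j => ∑ k, ∑ l, (C k i * C l j) • toMat A k l
  (oRe (M 0 0), oRe (M 1 1), oRe (M 2 2), M 1 2, M 2 0, M 0 1)

/-- The coordinates of `A ∈ J₃(𝕆)` in the fixed standard `ℂ`-basis of `ℂ³ × 𝕆³`. -/
def coords (A : J3) : Fin 27 → ℂ :=
  ![A.1, A.2.1, A.2.2.1,
    A.2.2.2.1.1.re, A.2.2.2.1.1.imI, A.2.2.2.1.1.imJ, A.2.2.2.1.1.imK,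
    A.2.2.2.1.2.re, A.2.2.2.1.2.imI, A.2.2.2.1.2.imJ, A.2.2.2.1.2.imK,
    A.2.2.2.2.1.1.re, A.2.2.2.2.1.1.imI, A.2.2.2.2.1.1.imJ, A.2.2.2.2.1.1.imK,
    A.2.2.2.2.1.2.re, A.2.2.2.2.1.2.imI, A.2.2.2.2.1.2.imJ, A.2.2.2.2.1.2.imK,
    A.2.2.2.2.2.1.re, A.2.2.2.2.2.1.imI, A.2.2.2.2.2.1.imJ, A.2.2.2.2.2.1.imK,
    A.2.2.2.2.2.2.re, A.2.2.2.2.2.2.imI, A.2.2.2.2.2.2.imJ, A.2.2.2.2.2.2.imK]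

end Oct

/-!
For an imaginary unit `u` the Moufang identity `((x u) y) u = x (u (y u))` makes
`(R_u, -L_u R_u)` a twisted triality pair, and on imaginary octonions `-L_u R_u` is the half-turn
`x ↦ B(x, u) u - x` about `u`, where `B` is the polar form of the norm. Taking `u` proportional
to `a + m` therefore moves `a` to `m`, provided `a + m` can be normalised, i.e. is not isotropic.
Twisted pairs are closed under composition and inversion, so it suffices to connect every point
of the sphere to the base point `i`; by the parallelogram law `w + i` and `w - i` are not both
isotropic, and `i` is connected to `-i` through `j`.
-/

namespace Oct

open QuadraticMap Quaternion

theorem omul_oone (x : Oct) : omul x oone = x := by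
  simp [omul, oone]

theorem oone_omul (x : Oct) : omul oone x = x := by
  simp [omul, oone]

theorem omul_zero (x : Oct) : omul x 0 = 0 :=
  (Lmul x).map_zero

theorem omul_neg (x y : Oct) : omul x (-y) = -omul x y :=
  (Lmul x).map_neg y

theorem neg_omul (x y : Oct) : omul (-x) y = -omul x y :=
  (Rmul y).map_neg x

theorem onormSq_smul (t : ℂ) (x : Oct) : onormSq (t • x) = t ^ 2 * onormSq x := by
  simp [onormSq, normSq_def']
  ring

theorem onormSq_neg (x : Oct) : onormSq (-x) = onormSq x := by
  simp [onormSq]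

theorem oRe_add (x y : Oct) : oRe (x + y) = oRe x + oRe y := rfl

theorem oRe_neg (x : Oct) : oRe (-x) = -oRe x := rfl

theorem oRe_smul (t : ℂ) (x : Oct) : oRe (t • x) = t * oRe x := by
  simp [oRe]

theorem onormSq_add_add_onormSq_sub (x y : Oct) :
    onormSq (x + y) + onormSq (x - y) = 2 * onormSq x + 2 * onormSq y := by
  simp [onormSq, normSq_def']
  ring

theorem polar_onormSq_self_add (a m : Oct) :
    polar onormSq a (a + m) = onormSq (a + m) + onormSq a - onormSq m := by
  simp [polar, onormSq, normSq_def']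
  ring

theorem onormSq_omul (x y : Oct) : onormSq (omul x y) = onormSq x * onormSq y := by
  simp only [omul, onormSq, normSq_def', re_sub, re_add, imI_sub, imI_add, imJ_sub, imJ_add,
    imK_sub, imK_add, re_mul, imI_mul, imJ_mul, imK_mul, re_star, imI_star, imJ_star, imK_star]
  ring

theorem omul_self (u : Oct) : omul u u = (2 * oRe u) • u - onormSq u • oone := by
  ext <;> simp [omul, oone, oRe, onormSq, normSq_def', re_mul, imI_mul, imJ_mul, imK_mul] <;> ring

theorem moufang (x y u : Oct) : omul (omul (omul x u) y) u = omul x (omul u (omul y u)) := by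
  ext <;> simp only [omul, re_sub, re_add, imI_sub, imI_add, imJ_sub, imJ_add, imK_sub, imK_add,
    re_mul, imI_mul, imJ_mul, imK_mul, re_star, imI_star, imJ_star, imK_star] <;> ring

theorem omul_omul_self (x u : Oct) : omul (omul x u) u = omul x (omul u u) := by
  simpa [omul_oone, oone_omul] using moufang x oone u

theorem omul_omul_omul_self_of_oRe_eq_zero {u a : Oct} (hu : oRe u = 0) (ha : oRe a = 0) :
    omul u (omul a u) = onormSq u • a - polar onormSq a u • u := by
  ext <;> simp [omul, oRe, onormSq, polar, normSq_def', re_mul, imI_mul, imJ_mul, imK_mul]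
    at hu ha ⊢ <;> simp [hu, ha] <;> ring

theorem omul_omul_eq_neg_of_imaginary_unit {u : Oct} (hu0 : oRe u = 0) (hu1 : onormSq u = 1)
    (x : Oct) : omul (omul x u) u = -x := by
  rw [omul_omul_self, omul_self, hu0, hu1]
  ext <;> simp [omul, oone]

theorem TwistedPair.comp {S1 S2 T1 T2 : Oct →ₗ[ℂ] Oct} (hS : TwistedPair S1 S2)
    (hT : TwistedPair T1 T2) : TwistedPair (S1 ∘ₗ T1) (S2 ∘ₗ T2) := by
  obtain ⟨hS1, hS2, hSn1, hSn2, hSmul⟩ := hS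
  obtain ⟨hT1, hT2, hTn1, hTn2, hTmul⟩ := hT
  refine ⟨hS1.comp hT1, hS2.comp hT2, fun x => ?_, fun x => ?_, fun x y => ?_⟩
  · simp [hSn1, hTn1]
  · simp [hSn2, hTn2]
  · simp [hSmul, hTmul]

theorem TwistedPair.symm {T1 T2 : Oct →ₗ[ℂ] Oct} (h : TwistedPair T1 T2) :
    TwistedPair (LinearEquiv.ofBijective T1 h.1).symm (LinearEquiv.ofBijective T2 h.2.1).symm := by
  obtain ⟨hT1, hT2, hn1, hn2, hmul⟩ := h
  set E1 := LinearEquiv.ofBijective T1 hT1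
  set E2 := LinearEquiv.ofBijective T2 hT2
  refine ⟨E1.symm.bijective, E2.symm.bijective, fun x => ?_, fun x => ?_, fun x y => ?_⟩
  · simpa [E1] using (hn1 (E1.symm x)).symm
  · simpa [E2] using (hn2 (E2.symm x)).symm
  · apply hT1.1
    simpa [E1, E2] using (hmul (E1.symm x) (E2.symm y)).symm

/-- `T₂ y = 0` forces `T₁ y = T₁ 1 · T₂ y = 0`. -/
theorem bijective_of_omul_eq {T1 T2 : Oct →ₗ[ℂ] Oct} (hT1 : Function.Injective T1)
    (hmul : ∀ x y, omul (T1 x) (T2 y) = T1 (omul x y)) : Function.Bijective T2 := by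
  have hinj : Function.Injective T2 := by
    refine (injective_iff_map_eq_zero T2).2 fun y hy => hT1 ?_
    rw [map_zero, ← oone_omul y, ← hmul, hy, omul_zero]
  exact ⟨hinj, LinearMap.injective_iff_surjective.1 hinj⟩

theorem twistedPair_rmul {u : Oct} (hu0 : oRe u = 0) (hu1 : onormSq u = 1) :
    TwistedPair (Rmul u) (-(Lmul u ∘ₗ Rmul u)) := by
  have hR := omul_omul_eq_neg_of_imaginary_unit hu0 hu1
  have hmul : ∀ x y, omul (Rmul u x) ((-(Lmul u ∘ₗ Rmul u)) y) = Rmul u (omul x y) := by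
    intro x y
    show omul (omul x u) (-omul u (omul y u)) = omul (omul x y) u
    rw [omul_neg, ← moufang, hR, neg_omul, neg_omul, neg_neg]
  have hinj : Function.Injective (Rmul u) := fun x y h =>
    neg_injective <| (hR x).symm.trans <| (congrArg (omul · u) h).trans (hR y)
  refine ⟨⟨hinj, LinearMap.injective_iff_surjective.1 hinj⟩, bijective_of_omul_eq hinj hmul,
    fun x => ?_, fun x => ?_, hmul⟩
  · show onormSq (omul x u) = _
    rw [onormSq_omul, hu1, mul_one]
  · show onormSq (-omul u (omul x u)) = _
    rw [onormSq_neg, onormSq_omul, onormSq_omul, hu1, one_mul, mul_one]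

def TrialityRelated (z z' : Oct) : Prop :=
  ∃ T1 T2 : Oct →ₗ[ℂ] Oct, TwistedPair T1 T2 ∧ T2 z = z'

theorem TrialityRelated.trans {a b c : Oct} (hab : TrialityRelated a b)
    (hbc : TrialityRelated b c) : TrialityRelated a c := by
  obtain ⟨T1, T2, hT, rfl⟩ := hab
  obtain ⟨S1, S2, hS, rfl⟩ := hbc
  exact ⟨S1 ∘ₗ T1, S2 ∘ₗ T2, hS.comp hT, rfl⟩

theorem TrialityRelated.symm {a b : Oct} (h : TrialityRelated a b) : TrialityRelated b a := by
  obtain ⟨T1, T2, hT, rfl⟩ := h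
  exact ⟨_, _, hT.symm, (LinearEquiv.ofBijective T2 hT.2.1).symm_apply_apply a⟩

theorem trialityRelated_of_onormSq_add_ne_zero {a m : Oct} (ha0 : oRe a = 0) (hm0 : oRe m = 0)
    (ha1 : onormSq a = 1) (hm1 : onormSq m = 1) (hne : onormSq (a + m) ≠ 0) :
    TrialityRelated a m := by
  set v := a + m with hv
  obtain ⟨c, hc⟩ := IsAlgClosed.exists_pow_nat_eq (onormSq v)⁻¹ two_pos
  have hcv : c ^ 2 * onormSq v = 1 := by rw [hc, inv_mul_cancel₀ hne]
  have hv0 : oRe v = 0 := by rw [hv, oRe_add, ha0, hm0, add_zero]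
  have hpolar : polar onormSq a v = onormSq v := by
    rw [polar_onormSq_self_add, ha1, hm1, add_sub_cancel_right]
  refine ⟨_, _, twistedPair_rmul (u := c • v) ?_ ?_, ?_⟩
  · rw [oRe_smul, hv0, mul_zero]
  · rw [onormSq_smul, hcv]
  · show -omul (c • v) (omul a (c • v)) = m
    rw [omul_smul, smul_omul, omul_smul, omul_omul_omul_self_of_oRe_eq_zero hv0 ha0, hpolar, hv]
    linear_combination (norm := module) hcv • m

def octI : Oct := (⟨0, 1, 0, 0⟩, 0)

def octJ : Oct := (⟨0, 0, 1, 0⟩, 0)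

theorem oRe_octI : oRe octI = 0 := rfl

theorem onormSq_octI : onormSq octI = 1 := by
  simp only [onormSq, normSq_def']
  norm_num [octI]

theorem trialityRelated_octI_neg_octI : TrialityRelated octI (-octI) := by
  have hJ0 : oRe octJ = 0 := rfl
  have hJ1 : onormSq octJ = 1 := by
    simp only [onormSq, normSq_def']
    norm_num [octJ]
  have hnI0 : oRe (-octI) = 0 := by rw [oRe_neg, oRe_octI, neg_zero]
  have hnI1 : onormSq (-octI) = 1 := by rw [onormSq_neg, onormSq_octI]
  refine (trialityRelated_of_onormSq_add_ne_zero oRe_octI hJ0 onormSq_octI hJ1 ?_).trans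
    (trialityRelated_of_onormSq_add_ne_zero hJ0 hnI0 hJ1 hnI1 ?_) <;>
    simp [onormSq, normSq_def'] <;> norm_num [octI, octJ]

theorem trialityRelated_octI {w : Oct} (hw0 : oRe w = 0) (hw1 : onormSq w = 1) :
    TrialityRelated octI w := by
  by_cases h : onormSq (octI + w) = 0
  · have hne : onormSq (-octI + w) ≠ 0 := by
      have hpar := onormSq_add_add_onormSq_sub w octI
      rw [add_comm w, h, hw1, onormSq_octI, zero_add, ← neg_add_eq_sub] at hpar
      rw [hpar]
      norm_num
    refine trialityRelated_octI_neg_octI.trans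
      (trialityRelated_of_onormSq_add_ne_zero ?_ hw0 ?_ hw1 hne)
    · rw [oRe_neg, oRe_octI, neg_zero]
    · rw [onormSq_neg, onormSq_octI]
  · exact trialityRelated_of_onormSq_add_ne_zero oRe_octI hw0 onormSq_octI hw1 h

/-- Transitivity of the triality group on the complex 6-sphere: for any two purely imaginary
octonions of squared norm `1`, some twisted triality pair `(T₁, T₂)` has `T₂ z = z'`. -/
theorem triality_transitive_on_sphere (z z' : Oct) (hz : oRe z = 0) (hz' : oRe z' = 0)
    (h1 : onormSq z = 1) (h1' : onormSq z' = 1) :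
    ∃ T1 T2 : Oct →ₗ[ℂ] Oct, TwistedPair T1 T2 ∧ T2 z = z' :=
  (trialityRelated_octI hz h1).symm.trans (trialityRelated_octI hz' h1')

end Oct
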